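/- Fix c ∈ ℂ. In the field of rational functions in the variables u^γ_ℓ (γ = 1,2,3) with shift S, let D̃_t be the total derivative for the 3-component equation ∂_t(u^1) = c u^2_0 − c u^2_1 + u^1_0 u^2_0 − u^2_1 u^2_0 − u^1_1 u^2_1 + u^2_1 u^2_2 + u^3_0 − u^3_1, ∂_t(u^2) = u^2_0(u^1_{−1} − u^1_0 − u^2_0 + u^2_1), ∂_t(u^3) = u^3_0(u^1_{−1} − u^1_0 + u^2_{−1} − u^2_0). Then Φ^1 := u^1_0, Φ^2 := −c u^2_0 − u^1_0 u^2_0 + u^2_1 u^2_0 − u^3_0, Φ^3 := u^2_0 u^3_1 satisfy D̃_t(Φ^1) = S(Φ^2) − Φ^2, D̃_t(Φ^2) = Φ^2·(S^{-1}(Φ^1) − Φ^1) + Φ^3 − S^{-1}(Φ^3), and D̃_t(Φ^3) = Φ^3·(S^{-1}(Φ^1) − S(Φ^1)); that is, (Φ^1, Φ^2, Φ^3) is a Miura-type transformation from this equation to the Zhang–Chen equation ∂_t(z^1) = z^2_1 − z^2_0, ∂_t(z^2) = z^2_0(z^1_{−1} − z^1_0) + z^3_0 − z^3_{−1}, ∂_t(z^3)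 = z^3_0(z^1_{−1} − z^1_1). -/

import Mathlib

/-!
Every `S^m` fixes `ℂ` and sends `u^γ_ℓ` to `u^γ_{ℓ+m}`, so, after pushing `D̃_t` through the
three expressions with the Leibniz rule and substituting `D̃_t(u^γ_ℓ) = S^ℓ(G^γ)`, each of the
three identities becomes a polynomial identity in finitely many `u^γ_ℓ`.
-/

noncomputable section

open MvPolynomial

abbrev R3 : Type := MvPolynomial (Fin 3 × ℤ) ℂ
abbrev K3 : Type := FractionRing R3

def u (γ : Fin 3) (ℓ : ℤ) : K3 := algebraMap R3 K3 (X (γ, ℓ))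

def S3 : RingAut K3 :=
  IsFractionRing.ringEquivOfRingEquiv
    ((renameEquiv ℂ ((Equiv.refl (Fin 3)).prodCongr (Equiv.addRight (1:ℤ)))).toRingEquiv)

def Sz (ℓ : ℤ) : K3 ≃+* K3 := S3 ^ ℓ

theorem zpow_smul_of_smul_eq_add_one {G α : Type*} [Group G] [MulAction G α]
    {g : G} {x : ℤ → α} (h : ∀ n, g • x n = x (n + 1)) (m n : ℤ) :
    (g ^ m) • x n = x (n + m) := by
  induction m using Int.induction_on generalizing n with
  | zero => simp
  | succ m ih => rw [zpow_add_one, mul_smul, h, ih, add_assoc, add_comm 1]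
  | pred m ih =>
    have h_inv : g⁻¹ • x n = x (n - 1) := by rw [inv_smul_eq_iff, h, sub_add_cancel]
    rw [zpow_sub_one, mul_smul, h_inv, ih, sub_add_eq_add_sub, add_sub_assoc, sub_eq_add_neg]

theorem S3_u (γ : Fin 3) (ℓ : ℤ) : S3 (u γ ℓ) = u γ (ℓ + 1) := by
  simp [S3, u]

theorem S3_algebraMap (a : ℂ) : S3 (algebraMap ℂ K3 a) = algebraMap ℂ K3 a := by
  simp [S3, IsScalarTower.algebraMap_apply ℂ R3 K3 a]

theorem Sz_u (γ : Fin 3) (ℓ m : ℤ) : Sz m (u γ ℓ) = u γ (ℓ + m) :=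
  zpow_smul_of_smul_eq_add_one (g := S3) (x := u γ) (S3_u γ) m ℓ

theorem Sz_algebraMap (a : ℂ) (m : ℤ) : Sz m (algebraMap ℂ K3 a) = algebraMap ℂ K3 a :=
  (MulAction.stabilizer (RingAut K3) _).zpow_mem (S3_algebraMap a) m

/-- `(Φ¹, Φ², Φ³) = (u¹₀, −c u²₀ − u¹₀ u²₀ + u²₁ u²₀ − u³₀, u²₀ u³₁)`
is a Miura-type transformation from the 3-component equation
`∂ₜ(u¹) = c u²₀ − c u²₁ + u¹₀ u²₀ − u²₁ u²₀ − u¹₁ u²₁ + u²₁ u²₂ + u³₀ − u³₁`,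
`∂ₜ(u²) = u²₀(u¹₋₁ − u¹₀ − u²₀ + u²₁)`,
`∂ₜ(u³) = u³₀(u¹₋₁ − u¹₀ + u²₋₁ − u²₀)`
to the Zhang–Chen equation. -/
theorem statement18 (c : ℂ)
    -- the total derivative `D̃_t` for the 3-component equation above:
    (Dt : Derivation ℂ K3 K3)
    (hDtu : ∀ (γ : Fin 3) (ℓ : ℤ),
      Dt (u γ ℓ) = Sz ℓ
        (![algebraMap ℂ K3 c * u 1 0 - algebraMap ℂ K3 c * u 1 1 + u 0 0 * u 1 0 -
             u 1 1 * u 1 0 - u 0 1 * u 1 1 + u 1 1 * u 1 2 + u 2 0 - u 2 1,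
           u 1 0 * (u 0 (-1) - u 0 0 - u 1 0 + u 1 1),
           u 2 0 * (u 0 (-1) - u 0 0 + u 1 (-1) - u 1 0)] γ)) :
    Dt (u 0 0) =
        Sz 1 (-(algebraMap ℂ K3 c * u 1 0) - u 0 0 * u 1 0 + u 1 1 * u 1 0 - u 2 0) -
          (-(algebraMap ℂ K3 c * u 1 0) - u 0 0 * u 1 0 + u 1 1 * u 1 0 - u 2 0) ∧
    Dt (-(algebraMap ℂ K3 c * u 1 0) - u 0 0 * u 1 0 + u 1 1 * u 1 0 - u 2 0) =
        (-(algebraMap ℂ K3 c * u 1 0) - u 0 0 * u 1 0 + u 1 1 * u 1 0 - u 2 0) *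
            (Sz (-1) (u 0 0) - u 0 0) +
          u 1 0 * u 2 1 - Sz (-1) (u 1 0 * u 2 1) ∧
    Dt (u 1 0 * u 2 1) =
        u 1 0 * u 2 1 * (Sz (-1) (u 0 0) - Sz 1 (u 0 0)) := by
  obtain ⟨hD0, hD1, hD2⟩ : (∀ ℓ, Dt (u 0 ℓ) = _) ∧ (∀ ℓ, Dt (u 1 ℓ) = _) ∧ (∀ ℓ, Dt (u 2 ℓ) = _) :=
    ⟨hDtu 0, hDtu 1, hDtu 2⟩
  simp only [Matrix.cons_val_zero, Matrix.cons_val_one, Matrix.cons_val_two, Matrix.head_cons,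
    Matrix.tail_cons, map_add, map_sub, map_mul, Sz_u, Sz_algebraMap, zero_add] at hD0 hD1 hD2
  simp only [map_add, map_sub, map_mul, map_neg, Sz_u, Sz_algebraMap, Derivation.leibniz,
    Derivation.map_algebraMap, smul_eq_mul, hD0, hD1, hD2]
  -- `ring_nf` also normalizes the shifted indices, such as `u 1 (1 + 0)`.
  refine ⟨?_, ?_, ?_⟩ <;> ring_nf
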